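/- There is an absolute constant C > 0 such that for every integer Q ≥ 2 and all coprime integers q, a with Q/2 < q ≤ Q and 1 ≤ a ≤ q−1, writing ā for the multiplicative inverse of a mod q in {1,…,q−1}: (a) if ā ≥ max(2q−Q, Q−q+1) then |ω_{q,a} − (Q−q+ā)/(Q·q·ā·(1+a²/q²))| ≤ C/(Q²·ā); (b) if ā ≤ min(2q−Q−1, Q−q) then |ω_{q,a} − (Q−ā)/(Q·q·(q−ā)·(1+a²/q²))| ≤ C/(Q²·(q−ā)). -/

import Mathlib

/-!
A ray of slope `t = tan ω` crosses the column `n` at height `n t`, so it hits the scatterer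
`(q, a)` of half-height `δ = 1/Q` first iff `|q t - a| ≤ δ` and `|n t - m| > δ` for all
`1 ≤ n < q` and all `m`. With `x = q t - a` we have `q (n t - m) = n x + (n a - m q)` and
`|n x| < 1`, so only the columns with `n a - m q = ±1`, that is `n = ā` and `n = q - ā`, can come
within `δ`. These two columns cut the window `|x| ≤ δ` down to
`-min(δ, (1 - qδ)/ā) < x < min(δ, (1 - qδ)/(q - ā))`. Hence `ω_{q,a}` is a difference of two
arctangents, and the mean value theorem gives the main term (the length of the window in `t` over
`1 + a²/q²`) with an error of at most that length times `1/(Qq)`. In the two ranges of `ā` of the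
statement both minima are explicit.
-/

open Real MeasureTheory Set

/-- Free path length in the model with vertical scatterers of half-height `h`. -/
noncomputable def lv (h ω : ℝ) : ℝ :=
  sInf {τ : ℝ | 0 < τ ∧ ∃ p : ℤ × ℤ, p ≠ (0, 0) ∧
    τ * Real.cos ω = (p.1 : ℝ) ∧ |τ * Real.sin ω - (p.2 : ℝ)| ≤ h}

/-- The measure of the set of directions in `[0, π/4)` whose trajectory first
hits the vertical scatterer centered at `(q, a)`. -/
noncomputable def omegaQA (Q : ℕ) (q a : ℤ) : ℝ :=
  (volume {ω ∈ Set.Ico (0 : ℝ) (Real.pi / 4) |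
      lv (1 / (Q : ℝ)) ω * Real.cos ω = (q : ℝ) ∧
      |lv (1 / (Q : ℝ)) ω * Real.sin ω - (a : ℝ)| ≤ 1 / (Q : ℝ)}).toReal

def hitColumns (δ t : ℝ) : Set ℤ := {n | 1 ≤ n ∧ ∃ m : ℤ, |n * t - m| ≤ δ}

def HitsFirst (δ : ℝ) (q a : ℤ) (t : ℝ) : Prop :=
  |q * t - a| ≤ δ ∧ ∀ n m : ℤ, 1 ≤ n → n < q → δ < |n * t - m|

section FreePath

variable {δ ω : ℝ}

lemma lv_eq_sInf_image (hcos : 0 < cos ω) :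
    lv δ ω = sInf ((fun n : ℤ => (n : ℝ) / cos ω) '' hitColumns δ (tan ω)) := by
  have hmul : ∀ n : ℝ, n / cos ω * sin ω = n * tan ω := fun n => by
    rw [tan_eq_sin_div_cos]; field_simp
  unfold lv
  congr 1
  ext τ
  constructor
  · rintro ⟨hτ, ⟨n, m⟩, -, hn, hm⟩
    have hτn : τ = n / cos ω := (eq_div_iff hcos.ne').2 hn
    refine ⟨n, ⟨?_, m, ?_⟩, hτn.symm⟩
    · exact_mod_cast (show (0 : ℝ) < n by rw [← hn]; positivity)
    · rwa [hτn, hmul] at hm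
  · rintro ⟨n, ⟨hn, m, hm⟩, rfl⟩
    have hn' : (0 : ℝ) < n := by exact_mod_cast hn
    refine ⟨by positivity, (n, m), fun h => by simp_all, div_mul_cancel₀ _ hcos.ne', ?_⟩
    rwa [hmul]

lemma lv_eq_div_cos_of_isLeast (hcos : 0 < cos ω) {n : ℤ}
    (h : IsLeast (hitColumns δ (tan ω)) n) :
    lv δ ω = n / cos ω := by
  rw [lv_eq_sInf_image hcos]
  refine (MonotoneOn.map_isLeast (fun i _ j _ hij => ?_) h).csInf_eq
  gcongr

lemma lv_mul_cos_eq_iff (hcos : 0 < cos ω) {q : ℤ} (hq : q ≠ 0) :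
    lv δ ω * cos ω = q ↔ IsLeast (hitColumns δ (tan ω)) q := by
  rcases (hitColumns δ (tan ω)).eq_empty_or_nonempty with h | h
  · rw [lv_eq_sInf_image hcos, h, image_empty, Real.sInf_empty]
    simp [IsLeast, eq_comm, hq]
  · obtain ⟨n, hn, hn_le⟩ := Int.exists_least_of_bdd ⟨1, fun z hz => hz.1⟩ h
    have hleast : IsLeast (hitColumns δ (tan ω)) n := ⟨hn, hn_le⟩
    rw [lv_eq_div_cos_of_isLeast hcos hleast, div_mul_cancel₀ _ hcos.ne', Int.cast_inj]
    exact ⟨fun h => h ▸ hleast, hleast.unique⟩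

lemma lv_hitsFirst_iff (hcos : 0 < cos ω) {q a : ℤ} (hq : 1 ≤ q) :
    (lv δ ω * cos ω = q ∧ |lv δ ω * sin ω - a| ≤ δ) ↔ HitsFirst δ q a (tan ω) := by
  have hsin : IsLeast (hitColumns δ (tan ω)) q → lv δ ω * sin ω = q * tan ω := fun h => by
    rw [lv_eq_div_cos_of_isLeast hcos h, tan_eq_sin_div_cos]; ring
  rw [lv_mul_cos_eq_iff hcos (by omega)]
  constructor
  · rintro ⟨hleast, ha⟩
    rw [hsin hleast] at ha
    refine ⟨ha, fun n m hn hnq => ?_⟩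
    by_contra! hm
    exact absurd (hleast.2 ⟨hn, m, hm⟩) (not_le.2 hnq)
  · rintro ⟨ha, hfirst⟩
    have hleast : IsLeast (hitColumns δ (tan ω)) q :=
      ⟨⟨hq, a, ha⟩, fun n ⟨hn, m, hm⟩ => not_lt.1 fun hnq => (hfirst n m hn hnq).not_ge hm⟩
    exact ⟨hleast, hsin hleast ▸ ha⟩

end FreePath

lemma Int.eq_of_mul_modEq_of_mul_inv_modEq_one {q a abar n c r : ℤ}
    (hinv : a * abar ≡ 1 [ZMOD q]) (hn : 0 ≤ n) (hnq : n < q) (hr : 0 ≤ r) (hrq : r < q)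
    (h : n * a ≡ c [ZMOD q]) (hc : c * abar ≡ r [ZMOD q]) : n = r := by
  have hmod : n ≡ r [ZMOD q] :=
    calc n = n * 1 := (mul_one n).symm
      _ ≡ n * (a * abar) [ZMOD q] := hinv.symm.mul_left n
      _ = n * a * abar := (mul_assoc n a abar).symm
      _ ≡ c * abar [ZMOD q] := h.mul_right abar
      _ ≡ r [ZMOD q] := hc
  rwa [Int.ModEq, Int.emod_eq_of_lt hn hnq, Int.emod_eq_of_lt hr hrq] at hmod

lemma lt_one_add_mul_iff {b c x : ℝ} (hb : 0 < b) : c < 1 + b * x ↔ -((1 - c) / b) < x := by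
  rw [neg_lt, lt_div_iff₀ hb]
  constructor <;> intro h <;> linarith

lemma lt_one_sub_mul_iff {b c x : ℝ} (hb : 0 < b) : c < 1 - b * x ↔ x < (1 - c) / b := by
  rw [lt_div_iff₀ hb]
  constructor <;> intro h <;> linarith

noncomputable def halfWidth (δ q b : ℝ) : ℝ := min δ ((1 - q * δ) / b)

lemma halfWidth_eq_left_of_mul_le {δ q b : ℝ} (hb : 0 < b) (h : (q + b) * δ ≤ 1) :
    halfWidth δ q b = δ :=
  min_eq_left (by rw [le_div_iff₀ hb]; linarith)

lemma halfWidth_eq_right_of_le_mul {δ q b : ℝ} (hb : 0 < b) (h : 1 ≤ (q + b) * δ) :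
    halfWidth δ q b = (1 - q * δ) / b :=
  min_eq_right (by rw [div_le_iff₀ hb]; linarith)

lemma halfWidth_le (δ q b : ℝ) : halfWidth δ q b ≤ δ := min_le_left _ _

lemma halfWidth_nonneg {δ q b : ℝ} (hδ : 0 ≤ δ) (hqδ : q * δ ≤ 1) (hb : 0 ≤ b) :
    0 ≤ halfWidth δ q b :=
  le_min hδ (div_nonneg (by linarith) hb)

section Window

variable {δ t : ℝ} {q a abar : ℤ}

lemma lt_abs_mul_sub_iff (a n m : ℤ) (hq : 0 < q) :
    δ < |n * t - m| ↔ q * δ < |n * (q * t - a) + ((n * a - m * q : ℤ) : ℝ)| := by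
  have hq' : (0 : ℝ) < q := by exact_mod_cast hq
  rw [show n * (q * t - a) + ((n * a - m * q : ℤ) : ℝ) = q * (n * t - m) by push_cast; ring,
    abs_mul, abs_of_pos hq', mul_lt_mul_iff_right₀ hq']

lemma HitsFirst.lt_one_add_mul (h : HitsFirst δ q a t) (hinv : a * abar ≡ 1 [ZMOD q])
    (hb : 0 < abar) (hbq : abar < q) :
    q * δ < 1 + abar * (q * t - a) ∧ q * δ < 1 - (q - abar) * (q * t - a) := by
  obtain ⟨k, hk⟩ := hinv.symm.dvd
  obtain ⟨hx, hfirst⟩ := h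
  have habar : (0 : ℝ) < abar := by exact_mod_cast hb
  have hqabar : (abar : ℝ) < q := by exact_mod_cast hbq
  have hxl := neg_abs_le (q * t - a)
  have hxu := le_abs_self (q * t - a)
  have h₁ := (lt_abs_mul_sub_iff a abar k (hb.trans hbq)).1 (hfirst abar k hb hbq)
  have h₂ := (lt_abs_mul_sub_iff a (q - abar) (a - k) (hb.trans hbq)).1
    (hfirst _ _ (by omega) (by omega))
  rw [show abar * a - k * q = 1 by linear_combination hk] at h₁
  rw [show (q - abar) * a - (a - k) * q = -1 by linear_combination -hk] at h₂
  push_cast at h₁ h₂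
  constructor
  · rcases lt_abs.1 h₁ with h | h
    · linarith
    · nlinarith
  · rcases lt_abs.1 h₂ with h | h
    · nlinarith
    · linarith

lemma hitsFirst_of_lt_one_add_mul (hinv : a * abar ≡ 1 [ZMOD q]) (hb : 0 < abar)
    (hbq : abar < q) (hx : |q * t - a| ≤ δ) (hL : q * δ < 1 + abar * (q * t - a))
    (hR : q * δ < 1 - (q - abar) * (q * t - a)) : HitsFirst δ q a t := by
  refine ⟨hx, fun n m hn hnq => (lt_abs_mul_sub_iff a n m (hb.trans hbq)).2 ?_⟩
  set x : ℝ := q * t - a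
  have hq : (0 : ℝ) < q := by exact_mod_cast hb.trans hbq
  have hδ : 0 ≤ δ := (abs_nonneg x).trans hx
  have hqδ : (q : ℝ) * δ < 1 := by
    have habar : (0 : ℝ) < abar := by exact_mod_cast hb
    have hqabar : (0 : ℝ) < q - abar := by simpa using hbq
    refine lt_of_mul_lt_mul_left (a := (q : ℝ)) ?_ hq.le
    nlinarith [mul_lt_mul_of_pos_left hL hqabar, mul_lt_mul_of_pos_left hR habar]
  have hn' : (1 : ℝ) ≤ n := by exact_mod_cast hn
  have hnq' : (n : ℝ) + 1 ≤ q := by exact_mod_cast hnq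
  have hnx : |n * x| ≤ (q - 1) * δ := by
    rw [abs_mul, abs_of_pos (by linarith)]
    exact mul_le_mul (by linarith) hx (abs_nonneg x) (by linarith)
  have hcong : n * a ≡ n * a - m * q [ZMOD q] := Int.modEq_iff_dvd.2 ⟨-m, by ring⟩
  rcases (by omega : n * a - m * q = 1 ∨ n * a - m * q = -1 ∨ n * a - m * q = 0 ∨
      n * a - m * q ≤ -2 ∨ 2 ≤ n * a - m * q) with hj | hj | hj | hj
  · rw [hj] at hcong ⊢
    rw [Int.eq_of_mul_modEq_of_mul_inv_modEq_one hinv (by omega) hnq hb.le hbq hcong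
      (by rw [one_mul])]
    calc (q : ℝ) * δ < 1 + abar * x := hL
      _ ≤ |abar * x + ((1 : ℤ) : ℝ)| := by push_cast; linarith [le_abs_self (abar * x + 1)]
  · rw [hj] at hcong ⊢
    rw [Int.eq_of_mul_modEq_of_mul_inv_modEq_one (r := q - abar) hinv (by omega) hnq
      (by omega) (by omega) hcong (Int.modEq_iff_dvd.2 ⟨1, by ring⟩)]
    calc (q : ℝ) * δ < 1 - (q - abar) * x := hR
      _ ≤ |((q - abar : ℤ) : ℝ) * x + ((-1 : ℤ) : ℝ)| := by
        push_cast; linarith [neg_abs_le ((q - abar) * x + -1)]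
  · rw [hj] at hcong
    have := Int.eq_of_mul_modEq_of_mul_inv_modEq_one hinv (by omega) hnq le_rfl (by omega)
      hcong (by rw [zero_mul])
    omega
  · have hj' : (2 : ℝ) ≤ |((n * a - m * q : ℤ) : ℝ)| := by
      have : (2 : ℤ) ≤ |n * a - m * q| := le_abs.2 (hj.symm.imp_right fun h => by omega)
      rw [← Int.cast_abs]; exact_mod_cast this
    have := abs_sub_abs_le_abs_add ((n * a - m * q : ℤ) : ℝ) (n * x)
    calc (q : ℝ) * δ < 2 - (q - 1) * δ := by linarith
      _ ≤ |n * x + ((n * a - m * q : ℤ) : ℝ)| := by rw [add_comm]; linarith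

lemma hitsFirst_iff (hinv : a * abar ≡ 1 [ZMOD q]) (hb : 0 < abar) (hbq : abar < q) :
    HitsFirst δ q a t ↔ |q * t - a| ≤ δ ∧ q * δ < 1 + abar * (q * t - a) ∧
      q * δ < 1 - (q - abar) * (q * t - a) :=
  ⟨fun h => ⟨h.1, h.lt_one_add_mul hinv hb hbq⟩,
    fun ⟨hx, hL, hR⟩ => hitsFirst_of_lt_one_add_mul hinv hb hbq hx hL hR⟩

lemma Ioo_subset_setOf_hitsFirst (hinv : a * abar ≡ 1 [ZMOD q]) (hb : 0 < abar)
    (hbq : abar < q) :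
    Ioo ((a - halfWidth δ q abar) / q) ((a + halfWidth δ q (q - abar)) / q) ⊆
      {t | HitsFirst δ q a t} := by
  rintro t ⟨h₁, h₂⟩
  have hq : (0 : ℝ) < q := by exact_mod_cast hb.trans hbq
  rw [div_lt_iff₀ hq] at h₁
  rw [lt_div_iff₀ hq] at h₂
  obtain ⟨hl₁, hl₂⟩ := lt_min_iff.1 (show -(q * t - a) < halfWidth δ q abar by linarith)
  obtain ⟨hu₁, hu₂⟩ := lt_min_iff.1 (show q * t - a < halfWidth δ q (q - abar) by linarith)
  show HitsFirst δ q a t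
  rw [hitsFirst_iff hinv hb hbq,
    lt_one_add_mul_iff (by exact_mod_cast hb), lt_one_sub_mul_iff (by simpa using hbq)]
  exact ⟨abs_le.2 ⟨by linarith, hu₁.le⟩, by linarith, hu₂⟩

lemma setOf_hitsFirst_subset_Icc (hinv : a * abar ≡ 1 [ZMOD q]) (hb : 0 < abar)
    (hbq : abar < q) :
    {t | HitsFirst δ q a t} ⊆
      Icc ((a - halfWidth δ q abar) / q) ((a + halfWidth δ q (q - abar)) / q) := by
  intro t ht
  have hq : (0 : ℝ) < q := by exact_mod_cast hb.trans hbq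
  change HitsFirst δ q a t at ht
  rw [hitsFirst_iff hinv hb hbq,
    lt_one_add_mul_iff (by exact_mod_cast hb), lt_one_sub_mul_iff (by simpa using hbq),
    abs_le] at ht
  obtain ⟨⟨hx₁, hx₂⟩, hl, hu⟩ := ht
  have hl' : -(q * t - a) ≤ halfWidth δ q abar := le_min (by linarith) (by linarith)
  have hu' : q * t - a ≤ halfWidth δ q (q - abar) := le_min hx₂ hu.le
  constructor
  · rw [div_le_iff₀ hq]; linarith
  · rw [le_div_iff₀ hq]; linarith

end Window

lemma abs_inv_one_add_sq_sub_inv_one_add_sq_le (x y : ℝ) :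
    |1 / (1 + y ^ 2) - 1 / (1 + x ^ 2)| ≤ |y - x| := by
  have hx : 0 < 1 + x ^ 2 := by positivity
  have hy : 0 < 1 + y ^ 2 := by positivity
  have hsum : |x + y| ≤ (1 + x ^ 2) * (1 + y ^ 2) := by
    rw [abs_le]; constructor <;> nlinarith [sq_nonneg (x + 1), sq_nonneg (y + 1),
      sq_nonneg (x - 1), sq_nonneg (y - 1), sq_nonneg (x * y)]
  rw [div_sub_div _ _ hy.ne' hx.ne', abs_div, abs_of_pos (mul_pos hy hx),
    div_le_iff₀ (mul_pos hy hx), show 1 * (1 + x ^ 2) - (1 + y ^ 2) * 1 = (x - y) * (x + y) by ring,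
    abs_mul, abs_sub_comm]
  calc |y - x| * |x + y| ≤ |y - x| * ((1 + x ^ 2) * (1 + y ^ 2)) :=
        mul_le_mul_of_nonneg_left hsum (abs_nonneg _)
    _ = |y - x| * ((1 + y ^ 2) * (1 + x ^ 2)) := by ring

lemma abs_arctan_sub_arctan_sub_le {u v x e : ℝ} (huv : u ≤ v) (hu : |u - x| ≤ e)
    (hv : |v - x| ≤ e) :
    |arctan v - arctan u - (v - u) / (1 + x ^ 2)| ≤ (v - u) * e := by
  set f : ℝ → ℝ := fun y => arctan y - y / (1 + x ^ 2)
  have hf : ∀ y ∈ Icc u v, HasDerivWithinAt f (1 / (1 + y ^ 2) - 1 / (1 + x ^ 2)) (Icc u v) y :=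
    fun y _ => ((hasDerivAt_arctan y).sub ((hasDerivAt_id y).div_const _)).hasDerivWithinAt
  have bound : ∀ y ∈ Ico u v, ‖1 / (1 + y ^ 2) - 1 / (1 + x ^ 2)‖ ≤ e := fun y hy => by
    refine (abs_inv_one_add_sq_sub_inv_one_add_sq_le x y).trans ?_
    rw [abs_le] at hu hv ⊢
    constructor <;> linarith [hy.1, hy.2]
  have := norm_image_sub_le_of_norm_deriv_le_segment' hf bound v (right_mem_Icc.2 huv)
  rw [Real.norm_eq_abs, mul_comm] at this
  convert this using 2
  simp only [f]; ring

lemma volume_toReal_eq_sub_of_Ioo_subset_of_subset_Icc {s : Set ℝ} {u v : ℝ} (huv : u ≤ v)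
    (h₁ : Ioo u v ⊆ s) (h₂ : s ⊆ Icc u v) : (volume s).toReal = v - u := by
  have : volume s = ENNReal.ofReal (v - u) :=
    le_antisymm (Real.volume_Icc ▸ measure_mono h₂) (Real.volume_Ioo ▸ measure_mono h₁)
  rw [this, ENNReal.toReal_ofReal (sub_nonneg.2 huv)]

lemma volume_toReal_tan_mem_eq {T : Set ℝ} {u v : ℝ} (hu : 0 ≤ u) (huv : u ≤ v) (hv : v ≤ 1)
    (h₁ : Ioo u v ⊆ T) (h₂ : T ⊆ Icc u v) :
    (volume {ω ∈ Ico 0 (π / 4) | tan ω ∈ T}).toReal = arctan v - arctan u := by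
  have harctan_tan : ∀ ω ∈ Ico 0 (π / 4), arctan (tan ω) = ω := fun ω hω =>
    arctan_tan (by linarith [hω.1, pi_pos]) (by linarith [hω.2, pi_pos])
  refine volume_toReal_eq_sub_of_Ioo_subset_of_subset_Icc
    (arctan_strictMono.monotone huv) (fun ω hω => ?_) (fun ω hω => ?_)
  · have hω₀ : ω ∈ Ico 0 (π / 4) :=
      ⟨(arctan_zero ▸ arctan_strictMono.monotone hu).trans hω.1.le,
        hω.2.trans_le (arctan_one ▸ arctan_strictMono.monotone hv)⟩
    refine ⟨hω₀, h₁ ⟨?_, ?_⟩⟩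
    · rw [← arctan_strictMono.lt_iff_lt, harctan_tan ω hω₀]; exact hω.1
    · rw [← arctan_strictMono.lt_iff_lt, harctan_tan ω hω₀]; exact hω.2
  · obtain ⟨hu', hv'⟩ := h₂ hω.2
    rw [← harctan_tan ω hω.1]
    exact ⟨arctan_strictMono.monotone hu', arctan_strictMono.monotone hv'⟩

section Omega

variable {Q : ℕ} {q a abar : ℤ}

theorem omegaQA_eq_arctan_sub_arctan (hqQ : q ≤ Q) (ha : 1 ≤ a) (haq : a < q)
    (hinv : a * abar ≡ 1 [ZMOD q]) (hb : 0 < abar) (hbq : abar < q) :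
    omegaQA Q q a = arctan ((a + halfWidth (1 / Q) q (q - abar)) / q) -
      arctan ((a - halfWidth (1 / Q) q abar) / q) := by
  have hq : (1 : ℝ) ≤ q := by exact_mod_cast ha.trans haq.le
  have hqQ' : (q : ℝ) ≤ Q := by exact_mod_cast hqQ
  have ha' : (1 : ℝ) ≤ a := by exact_mod_cast ha
  have haq' : (a : ℝ) + 1 ≤ q := by exact_mod_cast haq
  have hQ : (0 : ℝ) < Q := by linarith
  have hδ : (0 : ℝ) < 1 / Q := by positivity
  have hqδ : (q : ℝ) * (1 / Q) ≤ 1 := by rw [mul_one_div, div_le_one hQ]; exact hqQ'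
  have hδ₁ : 1 / (Q : ℝ) ≤ 1 := (le_mul_of_one_le_left hδ.le hq).trans hqδ
  have hL₀ := halfWidth_nonneg hδ.le hqδ (show (0 : ℝ) ≤ abar by exact_mod_cast hb.le)
  have hR₀ := halfWidth_nonneg hδ.le hqδ (show (0 : ℝ) ≤ q - abar by simpa using hbq.le)
  have hL₁ := halfWidth_le (1 / (Q : ℝ)) q abar
  have hR₁ := halfWidth_le (1 / (Q : ℝ)) q (q - abar)
  have hset :
      {ω ∈ Ico 0 (π / 4) | lv (1 / Q) ω * cos ω = q ∧ |lv (1 / Q) ω * sin ω - a| ≤ 1 / Q} =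
        {ω ∈ Ico 0 (π / 4) | tan ω ∈ {t | HitsFirst (1 / Q) q a t}} :=
    Set.ext fun ω => and_congr_right fun hω => lv_hitsFirst_iff
      (cos_pos_of_mem_Ioo ⟨by linarith [hω.1, pi_pos], by linarith [hω.2, pi_pos]⟩)
      (by omega)
  rw [omegaQA, hset]
  refine volume_toReal_tan_mem_eq (div_nonneg (by linarith) (by linarith))
    (div_le_div_of_nonneg_right (by linarith) (by linarith)) ((div_le_one (by linarith)).2
      (by linarith)) (Ioo_subset_setOf_hitsFirst hinv hb hbq)
    (setOf_hitsFirst_subset_Icc hinv hb hbq)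

theorem abs_omegaQA_sub_le (hqQ : q ≤ Q) (ha : 1 ≤ a) (haq : a < q)
    (hinv : a * abar ≡ 1 [ZMOD q]) (hb : 0 < abar) (hbq : abar < q) :
    |omegaQA Q q a - (halfWidth (1 / Q) q abar + halfWidth (1 / Q) q (q - abar)) / q /
        (1 + (a / q) ^ 2)| ≤
      (halfWidth (1 / Q) q abar + halfWidth (1 / Q) q (q - abar)) / q * (1 / (Q * q)) := by
  have hq : (0 : ℝ) < q := by exact_mod_cast hb.trans hbq
  have hQ : (0 : ℝ) < Q := hq.trans_le (by exact_mod_cast hqQ)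
  have hqδ : (q : ℝ) * (1 / Q) ≤ 1 := by
    rw [mul_one_div, div_le_one hQ]; exact_mod_cast hqQ
  have hL₀ := halfWidth_nonneg (by positivity) hqδ (show (0 : ℝ) ≤ abar by exact_mod_cast hb.le)
  have hR₀ :=
    halfWidth_nonneg (by positivity) hqδ (show (0 : ℝ) ≤ q - abar by simpa using hbq.le)
  have hclose : ∀ w : ℝ, 0 ≤ w → w ≤ 1 / Q → |w / q| ≤ 1 / (Q * q) := fun w hw₀ hw₁ => by
    rw [abs_of_nonneg (div_nonneg hw₀ hq.le), ← div_div]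
    exact div_le_div_of_nonneg_right hw₁ hq.le
  have key := abs_arctan_sub_arctan_sub_le (x := a / q) (e := 1 / (Q * q))
    (u := (a - halfWidth (1 / Q) q abar) / q) (v := (a + halfWidth (1 / Q) q (q - abar)) / q)
    (div_le_div_of_nonneg_right (by linarith) hq.le)
    (by rw [← abs_neg]; convert hclose _ hL₀ (halfWidth_le _ _ _) using 2; ring)
    (by convert hclose _ hR₀ (halfWidth_le _ _ _) using 2; ring)
  rw [omegaQA_eq_arctan_sub_arctan hqQ ha haq hinv hb hbq]
  convert key using 3 <;> ring

theorem abs_omegaQA_sub_le_of_max_le_abar (ha : 1 ≤ a) (haq : a ≤ q - 1) (hb : 1 ≤ abar)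
    (hbq : abar ≤ q - 1) (hinv : a * abar ≡ 1 [ZMOD q])
    (h : max (2 * q - Q) (Q - q + 1) ≤ abar) :
    |omegaQA Q q a - ((Q : ℝ) - q + abar) / ((Q : ℝ) * q * abar * (1 + (a : ℝ) ^ 2 / q ^ 2))| ≤
      1 / ((Q : ℝ) ^ 2 * abar) := by
  have hqQ : q ≤ Q := by omega
  have hqQ' : (q : ℝ) ≤ Q := by exact_mod_cast hqQ
  have hq : (2 : ℝ) ≤ q := by exact_mod_cast (show 2 ≤ q by omega)
  have hQ : (0 : ℝ) < Q := by linarith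
  have hbq' : (abar : ℝ) ≤ q - 1 := by exact_mod_cast hbq
  have h₁ : 2 * (q : ℝ) - Q ≤ abar := by exact_mod_cast (max_le_iff.1 h).1
  have h₂ : (Q : ℝ) - q + 1 ≤ abar := by exact_mod_cast (max_le_iff.1 h).2
  have hest := abs_omegaQA_sub_le hqQ ha (by omega) hinv (by omega) (by omega)
  rw [halfWidth_eq_right_of_le_mul (by linarith) (by rw [mul_one_div, le_div_iff₀ hQ]; linarith),
    halfWidth_eq_left_of_mul_le (by linarith)
      (by rw [mul_one_div, div_le_one hQ]; linarith)] at hest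
  refine le_trans (le_of_eq ?_) (hest.trans ?_)
  · congr 2
    field_simp
  · field_simp
    nlinarith

theorem abs_omegaQA_sub_le_of_abar_le_min (ha : 1 ≤ a) (haq : a ≤ q - 1) (hb : 1 ≤ abar)
    (hbq : abar ≤ q - 1) (hinv : a * abar ≡ 1 [ZMOD q])
    (h : abar ≤ min (2 * q - Q - 1) (Q - q)) :
    |omegaQA Q q a - ((Q : ℝ) - abar) / ((Q : ℝ) * q * (q - abar) * (1 + (a : ℝ) ^ 2 / q ^ 2))| ≤
      1 / ((Q : ℝ) ^ 2 * (q - abar)) := by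
  have hqQ : q ≤ Q := by omega
  have hqQ' : (q : ℝ) ≤ Q := by exact_mod_cast hqQ
  have hq : (2 : ℝ) ≤ q := by exact_mod_cast (show 2 ≤ q by omega)
  have hQ : (0 : ℝ) < Q := by linarith
  have hb' : (1 : ℝ) ≤ abar := by exact_mod_cast hb
  have h₁ : (abar : ℝ) ≤ 2 * q - Q - 1 := by exact_mod_cast (le_min_iff.1 h).1
  have h₂ : (abar : ℝ) ≤ Q - q := by exact_mod_cast (le_min_iff.1 h).2
  have hqb : (0 : ℝ) < q - abar := by linarith
  have hest := abs_omegaQA_sub_le hqQ ha (by omega) hinv (by omega) (by omega)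
  rw [halfWidth_eq_left_of_mul_le (by linarith) (by rw [mul_one_div, div_le_one hQ]; linarith),
    halfWidth_eq_right_of_le_mul hqb (by rw [mul_one_div, le_div_iff₀ hQ]; linarith)] at hest
  refine le_trans (le_of_eq ?_) (hest.trans ?_)
  · congr 2
    field_simp
    ring
  · field_simp
    nlinarith

end Omega

theorem statement10 :
    ∃ C > 0, ∀ Q : ℕ, 2 ≤ Q → ∀ q a abar : ℤ, Int.gcd a q = 1 →
      (Q : ℝ) / 2 < (q : ℝ) → q ≤ (Q : ℤ) → 1 ≤ a → a ≤ q - 1 →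
      1 ≤ abar → abar ≤ q - 1 → Int.ModEq q (a * abar) 1 →
      (max (2 * q - (Q : ℤ)) ((Q : ℤ) - q + 1) ≤ abar →
        |omegaQA Q q a -
            ((Q : ℝ) - (q : ℝ) + (abar : ℝ)) /
              ((Q : ℝ) * (q : ℝ) * (abar : ℝ) * (1 + (a : ℝ) ^ 2 / (q : ℝ) ^ 2))|
          ≤ C / ((Q : ℝ) ^ 2 * (abar : ℝ))) ∧
      (abar ≤ min (2 * q - (Q : ℤ) - 1) ((Q : ℤ) - q) →
        |omegaQA Q q a -
            ((Q : ℝ) - (abar : ℝ)) /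
              ((Q : ℝ) * (q : ℝ) * ((q : ℝ) - (abar : ℝ)) *
                (1 + (a : ℝ) ^ 2 / (q : ℝ) ^ 2))|
          ≤ C / ((Q : ℝ) ^ 2 * ((q : ℝ) - (abar : ℝ)))) := by
  exact ⟨1, one_pos, fun Q _ q a abar _ _ _ ha haq hb hbq hinv =>
    ⟨abs_omegaQA_sub_le_of_max_le_abar ha haq hb hbq hinv,
      abs_omegaQA_sub_le_of_abar_le_min ha haq hb hbq hinv⟩⟩
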